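/- arXiv:1407.5752 — 2 statements merged into one kernel-verified Lean document; each statement's English description precedes it below -/
import Mathlib

section
/- For z in the upper half-plane, the Stieltjes transform of the semicircle law m(z) = ∫_{−2}^{2} (x − z)^{−1}·(1/(2π))·sqrt(4 − x²) dx satisfies m(z)² + z·m(z) + 1 = 0. -/
/-!
Substituting `x = 2 cos θ` on both halves of the circle turns `m(z)` into
`-(1/π) ∫₀^{2π} sin²θ / (z - 2 cos θ) dθ`. Write `z = w + w⁻¹` with `0 < |w| < 1`: the roots of
`w² - z w + 1` are `w` and `w⁻¹`, and neither lies on the unit circle since `z ∉ ℝ`. Then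
`ζ = e^{iθ}` turns this integral into a contour integral over the unit circle of
`(ζ² - 1)² / (ζ² (ζ - w)(ζ - w⁻¹))`, whose poles in the disk are `0` and `w`, with residues
`z` and `w - w⁻¹`. Hence `m(z) = -w`, a root of `m² + z m + 1 = (m + w)(m + w⁻¹)`.
-/

open Real Complex MeasureTheory intervalIntegral Metric

theorem Real.sqrt_sq_sub_sq_mul_cos {r : ℝ} (hr : 0 ≤ r) (θ : ℝ) :
    √(r ^ 2 - (r * Real.cos θ) ^ 2) = r * |Real.sin θ| := by
  rw [show r ^ 2 - (r * Real.cos θ) ^ 2 = (r * |Real.sin θ|) ^ 2 by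
    rw [mul_pow, mul_pow, sq_abs]; linear_combination (-r ^ 2) * Real.sin_sq_add_cos_sq θ]
  exact Real.sqrt_sq (by positivity)

theorem integral_sqrt_sq_sub_sq_smul {E : Type*} [NormedAddCommGroup E] [NormedSpace ℝ E]
    [CompleteSpace E] {g : ℝ → E} (hg : Continuous g) {r : ℝ} (hr : 0 ≤ r) :
    ∫ x in -r..r, √(r ^ 2 - x ^ 2) • g x =
      (2 : ℝ)⁻¹ • ∫ θ in 0..2 * π, (r * Real.sin θ) ^ 2 • g (r * Real.cos θ) := by
  set G : ℝ → E := fun x ↦ √(r ^ 2 - x ^ 2) • g x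
  have hsubst : ∀ a b, ∫ θ in a..b, -(r * Real.sin θ) • (G ∘ fun θ ↦ r * Real.cos θ) θ =
      ∫ x in r * Real.cos a..r * Real.cos b, G x := fun a b ↦
    integral_deriv_smul_comp (fun θ _ ↦ by simpa using (Real.hasDerivAt_cos θ).const_mul r)
      (by fun_prop) (by fun_prop)
  have hG : ∀ θ, (G ∘ fun θ ↦ r * Real.cos θ) θ = (r * |Real.sin θ|) • g (r * Real.cos θ) :=
    fun θ ↦ by simp only [Function.comp_apply, G, Real.sqrt_sq_sub_sq_mul_cos hr]
  have hupper : ∫ θ in 0..π, (r * Real.sin θ) ^ 2 • g (r * Real.cos θ) = ∫ x in -r..r, G x := by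
    have h := hsubst 0 π
    rw [Real.cos_zero, Real.cos_pi, mul_one, mul_neg_one] at h
    rw [← neg_neg (∫ x in -r..r, G x), ← integral_symm, ← h, ← intervalIntegral.integral_neg]
    refine integral_congr fun θ hθ ↦ ?_
    rw [Set.uIcc_of_le pi_pos.le] at hθ
    simp only [hG, abs_of_nonneg (Real.sin_nonneg_of_nonneg_of_le_pi hθ.1 hθ.2), smul_smul,
      neg_mul, neg_smul, neg_neg, sq]
  have hlower : ∫ θ in π..2 * π, (r * Real.sin θ) ^ 2 • g (r * Real.cos θ) =
      ∫ x in -r..r, G x := by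
    have h := hsubst π (2 * π)
    rw [Real.cos_two_pi, Real.cos_pi, mul_one, mul_neg_one] at h
    rw [← h]
    refine integral_congr fun θ hθ ↦ ?_
    rw [Set.uIcc_of_le (by linarith [pi_pos])] at hθ
    have hsin : Real.sin θ ≤ 0 := by
      rw [← Real.sin_sub_two_pi]
      exact Real.sin_nonpos_of_nonpos_of_neg_pi_le (by linarith [hθ.2]) (by linarith [hθ.1])
    simp only [hG, abs_of_nonpos hsin, smul_smul, sq]
    ring_nf
  rw [← integral_add_adjacent_intervals (a := 0) (b := π) (c := 2 * π)
    (by apply Continuous.intervalIntegrable; fun_prop)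
    (by apply Continuous.intervalIntegrable; fun_prop), hupper, hlower, ← two_smul ℝ, smul_smul,
    inv_mul_cancel₀ two_ne_zero, one_smul]

theorem exists_norm_lt_one_add_inv_eq {z : ℂ} (hz : z.im ≠ 0) :
    ∃ w : ℂ, w ≠ 0 ∧ ‖w‖ < 1 ∧ w + w⁻¹ = z := by
  obtain ⟨s, hs⟩ := IsAlgClosed.exists_pow_nat_eq (z ^ 2 - 4) two_pos
  set u := (z + s) / 2
  have hquad : u ^ 2 - z * u + 1 = 0 := by
    simp only [u]; linear_combination hs / 4
  have hu0 : u ≠ 0 := by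
    rintro h
    simp [h] at hquad
  have hu : u + u⁻¹ = z := by
    field_simp; linear_combination hquad
  have hu1 : ‖u‖ ≠ 1 := by
    intro h
    apply hz
    rw [← hu, RCLike.inv_eq_conj h, add_conj]
    simp
  rcases hu1.lt_or_gt with h | h
  · exact ⟨u, hu0, h, hu⟩
  · refine ⟨u⁻¹, inv_ne_zero hu0, ?_, by rw [inv_inv, add_comm, hu]⟩
    rw [norm_inv]
    exact inv_lt_one_of_one_lt₀ h

theorem one_lt_norm_inv {𝕜 : Type*} [NormedDivisionRing 𝕜] {w : 𝕜} (hw0 : w ≠ 0)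
    (hw : ‖w‖ < 1) : 1 < ‖w⁻¹‖ := by
  rw [norm_inv]
  exact one_lt_inv_iff₀.2 ⟨norm_pos_iff.2 hw0, hw⟩

theorem sq_sub_one_sq_div_eq {w ζ : ℂ} (hw : w ≠ 0) (hζ : ζ ≠ 0) (hζw : ζ - w ≠ 0)
    (hζw' : ζ - w⁻¹ ≠ 0) :
    (ζ ^ 2 - 1) ^ 2 / (ζ ^ 2 * (ζ - w) * (ζ - w⁻¹)) =
      1 + (w + w⁻¹) * ζ⁻¹ + ζ⁻¹ ^ 2 + (w - w⁻¹) * ((ζ - w)⁻¹ - (ζ - w⁻¹)⁻¹) := by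
  have : ζ * w - 1 ≠ 0 := by
    rwa [← inv_mul_cancel₀ hw, ← sub_mul, mul_ne_zero_iff_right hw]
  field_simp
  ring

theorem circleIntegral_sq_sub_one_sq_div {w : ℂ} (hw0 : w ≠ 0) (hw : ‖w‖ < 1) :
    ∮ ζ in C(0, 1), (ζ ^ 2 - 1) ^ 2 / (ζ ^ 2 * (ζ - w) * (ζ - w⁻¹)) = 4 * π * I * w := by
  have hsphere : ∀ a : ℂ, ‖a‖ ≠ 1 → ∀ ζ ∈ sphere (0 : ℂ) 1, ζ - a ≠ 0 := by
    rintro a ha ζ hζ h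
    rw [sub_eq_zero.1 h, mem_sphere_zero_iff_norm] at hζ
    exact ha hζ
  have h0 : ∀ ζ ∈ sphere (0 : ℂ) 1, ζ ≠ 0 := by simpa using hsphere 0 (by simp)
  have hw1 := hsphere w hw.ne
  have hw2 := hsphere w⁻¹ (one_lt_norm_inv hw0 hw).ne'
  have hconst : ∮ ζ in C(0, 1), (1 : ℂ) = 0 := by
    simpa using circleIntegral.integral_sub_zpow_of_ne (n := 0) (by norm_num) 0 0 1
  have hpole0 : ∮ ζ in C(0, 1), ζ⁻¹ = 2 * π * I := by
    simpa using circleIntegral.integral_sub_center_inv 0 one_ne_zero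
  have hpole0' : ∮ ζ in C(0, 1), ζ⁻¹ ^ 2 = 0 := by
    simpa [zpow_neg, inv_pow] using
      circleIntegral.integral_sub_zpow_of_ne (n := -2) (by norm_num) 0 0 1
  have hpoleIn : ∮ ζ in C(0, 1), (ζ - w)⁻¹ = 2 * π * I :=
    circleIntegral.integral_sub_inv_of_mem_ball (mem_ball_zero_iff.2 hw)
  have hpoleOut : ∮ ζ in C(0, 1), (ζ - w⁻¹)⁻¹ = 0 := by
    refine DiffContOnCl.circleIntegral_eq_zero zero_le_one (DifferentiableOn.diffContOnCl ?_)
    rw [closure_ball 0 one_ne_zero]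
    refine (differentiableOn_id.sub_const _).inv fun ζ hζ h ↦ ?_
    rw [mem_closedBall_zero_iff, sub_eq_zero.1 h] at hζ
    exact hζ.not_gt (one_lt_norm_inv hw0 hw)
  rw [circleIntegral.integral_congr zero_le_one fun ζ hζ ↦
      sq_sub_one_sq_div_eq hw0 (h0 ζ hζ) (hw1 ζ hζ) (hw2 ζ hζ),
    circleIntegral.integral_add, circleIntegral.integral_add, circleIntegral.integral_add,
    circleIntegral.integral_const_mul, circleIntegral.integral_const_mul,
    circleIntegral.integral_sub,
    hconst, hpole0, hpole0', hpoleIn, hpoleOut]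
  · ring
  all_goals exact ContinuousOn.circleIntegrable zero_le_one (by fun_prop (disch := assumption))

theorem deriv_circleMap_smul_sq_sub_one_sq_div {w : ℂ} (hw0 : w ≠ 0) (hw : ‖w‖ < 1) (θ : ℝ) :
    deriv (circleMap 0 1) θ • ((circleMap 0 1 θ ^ 2 - 1) ^ 2 /
        (circleMap 0 1 θ ^ 2 * (circleMap 0 1 θ - w) * (circleMap 0 1 θ - w⁻¹))) =
      4 * I * (Complex.sin θ ^ 2 / (w + w⁻¹ - 2 * Complex.cos θ)) := by
  rw [deriv_circleMap, smul_eq_mul]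
  have hnorm : ‖circleMap 0 1 θ‖ = 1 := by simp
  have hcos : 2 * Complex.cos θ = circleMap 0 1 θ + (circleMap 0 1 θ)⁻¹ := by
    rw [two_cos, neg_mul, Complex.exp_neg, circleMap_zero, ofReal_one, one_mul]
  have hsin : 2 * Complex.sin θ = ((circleMap 0 1 θ)⁻¹ - circleMap 0 1 θ) * I := by
    rw [two_sin, neg_mul, Complex.exp_neg, circleMap_zero, ofReal_one, one_mul]
  generalize circleMap 0 1 θ = ζ at hnorm hcos hsin ⊢
  have hζ0 : ζ ≠ 0 := norm_ne_zero_iff.1 (by simp [hnorm])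
  have hζw : ζ - w ≠ 0 := sub_ne_zero.2 (ne_of_apply_ne norm (by rw [hnorm]; exact hw.ne'))
  have hζw' : ζ - w⁻¹ ≠ 0 :=
    sub_ne_zero.2 (ne_of_apply_ne norm (by rw [hnorm]; exact (one_lt_norm_inv hw0 hw).ne))
  have hden : (ζ - w) * (ζ - w⁻¹) = -(ζ * (w + w⁻¹ - 2 * Complex.cos θ)) := by
    rw [hcos]; field_simp; ring
  have hD : w + w⁻¹ - 2 * Complex.cos θ ≠ 0 := by
    intro h
    rw [h, mul_zero, neg_zero] at hden
    exact mul_ne_zero hζw hζw' hden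
  have hnum : (ζ ^ 2 - 1) ^ 2 = -(ζ ^ 2 * (2 * Complex.sin θ) ^ 2) := by
    rw [hsin]; field_simp; linear_combination (ζ ^ 2 - 1) ^ 2 * I_sq
  rw [mul_assoc _ (ζ - w), hden, hnum]
  field_simp
  ring

theorem integral_sin_sq_div_add_inv_sub_two_cos {w : ℂ} (hw0 : w ≠ 0) (hw : ‖w‖ < 1) :
    ∫ θ in 0..2 * π, Complex.sin θ ^ 2 / (w + w⁻¹ - 2 * Complex.cos θ) = π * w := by
  have h := circleIntegral_sq_sub_one_sq_div hw0 hw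
  rw [circleIntegral, integral_congr fun θ _ ↦ deriv_circleMap_smul_sq_sub_one_sq_div hw0 hw θ,
    intervalIntegral.integral_const_mul] at h
  refine mul_left_cancel₀ (by simp : (4 * I : ℂ) ≠ 0) ?_
  rw [h]
  ring

theorem stieltjes_transform_semicircle_quadratic (z : ℂ) (hz : 0 < z.im) (m : ℂ)
    (hm : m = ∫ x in (-2 : ℝ)..2,
        (((1 / (2 * π)) * Real.sqrt (4 - x ^ 2) : ℝ) : ℂ) / ((x : ℂ) - z)) :
    m ^ 2 + z * m + 1 = 0 := by
  obtain ⟨w, hw0, hw, hwz⟩ := exists_norm_lt_one_add_inv_eq hz.ne'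
  have hcont : Continuous fun x : ℝ ↦ ((x : ℂ) - z)⁻¹ :=
    (by fun_prop : Continuous fun x : ℝ ↦ (x : ℂ) - z).inv₀ fun x h ↦ hz.ne' <| by
      simpa using congrArg Complex.im h
  have hmw : m = -w := by
    calc m = (2 * π : ℝ)⁻¹ • ∫ x in -2..2, √(2 ^ 2 - x ^ 2) • ((x : ℂ) - z)⁻¹ := by
          rw [hm, ← intervalIntegral.integral_smul]
          refine integral_congr fun x _ ↦ ?_
          norm_num [Complex.real_smul, div_eq_mul_inv]
          ring
      _ = (2 * π : ℝ)⁻¹ • (2 : ℝ)⁻¹ • ∫ θ in 0..2 * π,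
            (2 * Real.sin θ) ^ 2 • ((↑(2 * Real.cos θ) : ℂ) - z)⁻¹ := by
          rw [integral_sqrt_sq_sub_sq_smul hcont zero_le_two]
      _ = -(π : ℂ)⁻¹ * ∫ θ in 0..2 * π, Complex.sin θ ^ 2 / (w + w⁻¹ - 2 * Complex.cos θ) := by
          rw [hwz, ← intervalIntegral.integral_const_mul, ← intervalIntegral.integral_smul,
            ← intervalIntegral.integral_smul]
          refine integral_congr fun θ _ ↦ ?_
          rw [← neg_sub, inv_neg]
          simp only [Complex.real_smul]
          push_cast
          field_simp
      _ = -w := by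
          rw [integral_sin_sq_div_add_inv_sub_two_cos hw0 hw]
          field_simp
  rw [hmw, ← hwz]
  field_simp
  ring
end

section
/- For the quadratic potential V(x) = x²/2, the semicircle density satisfies the equilibrium equation: for every t with |t| < 2, the principal value integral ∫_{−2}^{2} ρ_sc(s)/(t − s) ds equals t/2 = V'(t)/2. -/
/-!
For `|t| < 2` the function `√(4 - x²) / (t - x)` has the explicit primitive
`F(x) = t·arcsin(x/2) - √(4 - x²) + √(4 - t²)·(log N(x) - log (x - t))`, where
`N(x) = 4 - t x + √(4 - t²)√(4 - x²)` stays positive on `[-2, 2]`. The truncated integral is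
`F(2) - F(-2) + F(t - ε) - F(t + ε)`; the logarithmic singularities at `t ± ε` cancel because
`log (-ε) = log ε`, so the principal value is `(F(2) - F(-2)) / (2π) = πt / (2π)`.
-/

open Real Filter MeasureTheory

open Set Topology

theorem setOf_lt_abs_sub_and_mem_Ioo {a b t ε : ℝ} (ha : a ≤ t + ε) (hb : t - ε ≤ b) :
    {s | ε < |s - t| ∧ s ∈ Ioo a b} = Ioo a (t - ε) ∪ Ioo (t + ε) b := by
  ext s
  simp only [mem_ofPred_eq, mem_union, mem_Ioo, lt_abs]
  constructor
  · rintro ⟨h | h, has, hsb⟩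
    · exact Or.inr ⟨by linarith, hsb⟩
    · exact Or.inl ⟨has, by linarith⟩
  · rintro (⟨has, hs⟩ | ⟨hs, hsb⟩)
    · exact ⟨Or.inr (by linarith), has, by linarith⟩
    · exact ⟨Or.inl (by linarith), by linarith, hsb⟩

theorem integral_Ioo_eq_sub_of_hasDerivAt {f F : ℝ → ℝ} {p q : ℝ} (hpq : p ≤ q)
    (hF : ContinuousOn F (Icc p q)) (hderiv : ∀ x ∈ Ioo p q, HasDerivAt F (f x) x)
    (hf : IntegrableOn f (Icc p q)) :
    ∫ x in Ioo p q, f x = F q - F p := by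
  rw [← integral_Ioc_eq_integral_Ioo, ← intervalIntegral.integral_of_le hpq]
  exact intervalIntegral.integral_eq_sub_of_hasDeriv_right_of_le hpq hF
    (fun x hx => (hderiv x hx).hasDerivWithinAt)
    ((intervalIntegrable_iff_integrableOn_Icc_of_le hpq).2 hf)

theorem tendsto_integral_punctured_of_hasDerivAt {f F : ℝ → ℝ} {a b t : ℝ}
    (hat : a < t) (htb : t < b) (hF : ContinuousOn F (Icc a b \ {t}))
    (hderiv : ∀ x ∈ Ioo a b, x ≠ t → HasDerivAt F (f x) x) (hf : ContinuousOn f (Icc a b \ {t}))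
    (hjump : Tendsto (fun ε => F (t - ε) - F (t + ε)) (𝓝[>] 0) (𝓝 0)) :
    Tendsto (fun ε => ∫ s in {s | ε < |s - t| ∧ s ∈ Ioo a b}, f s) (𝓝[>] 0)
      (𝓝 (F b - F a)) := by
  have piece : ∀ p q, p ≤ q → Icc p q ⊆ Icc a b \ {t} →
      IntegrableOn f (Ioo p q) ∧ ∫ x in Ioo p q, f x = F q - F p := by
    intro p q hpq hsub
    have hap : a ≤ p := (hsub ⟨le_rfl, hpq⟩).1.1
    have hqb : q ≤ b := (hsub ⟨hpq, le_rfl⟩).1.2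
    have hfpq : IntegrableOn f (Icc p q) := (hf.mono hsub).integrableOn_Icc
    refine ⟨hfpq.mono_set Ioo_subset_Icc_self,
      integral_Ioo_eq_sub_of_hasDerivAt hpq (hF.mono hsub) (fun x hx => ?_) hfpq⟩
    exact hderiv x ⟨hap.trans_lt hx.1, hx.2.trans_le hqb⟩ (hsub (Ioo_subset_Icc_self hx)).2
  have hsplit : ∀ ε ∈ Ioo 0 (min (t - a) (b - t)),
      ∫ s in {s | ε < |s - t| ∧ s ∈ Ioo a b}, f s = F b - F a + (F (t - ε) - F (t + ε)) := by
    rintro ε ⟨hε, hεt⟩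
    have hεa : ε < t - a := hεt.trans_le (min_le_left _ _)
    have hεb : ε < b - t := hεt.trans_le (min_le_right _ _)
    obtain ⟨hleft, hleft_eq⟩ := piece a (t - ε) (by linarith) fun x hx =>
      ⟨⟨hx.1, by linarith [hx.2]⟩, fun hxt => by linarith [hx.2, mem_singleton_iff.1 hxt]⟩
    obtain ⟨hright, hright_eq⟩ := piece (t + ε) b (by linarith) fun x hx =>
      ⟨⟨by linarith [hx.1], hx.2⟩, fun hxt => by linarith [hx.1, mem_singleton_iff.1 hxt]⟩
    rw [setOf_lt_abs_sub_and_mem_Ioo (by linarith) (by linarith),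
      setIntegral_union (disjoint_left.2 fun x h₁ h₂ => by linarith [h₁.2, h₂.1])
        measurableSet_Ioo hleft hright, hleft_eq, hright_eq]
    ring
  have hlim := (tendsto_const_nhds (x := F b - F a)).add hjump
  rw [add_zero] at hlim
  refine hlim.congr' ?_
  filter_upwards [Ioo_mem_nhdsGT (lt_min (sub_pos.2 hat) (sub_pos.2 htb))] with ε hε
  exact (hsplit ε hε).symm

theorem hasDerivAt_sqrt_sub_sq {c x : ℝ} (hx : 0 < c - x ^ 2) :
    HasDerivAt (fun y => √(c - y ^ 2)) (-x / √(c - x ^ 2)) x := by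
  have h := ((hasDerivAt_pow 2 x).const_sub c).sqrt hx.ne'
  convert h using 1
  field_simp [(sqrt_pos.2 hx).ne']
  ring

theorem hasDerivAt_arcsin_div_two {x : ℝ} (hx : |x| < 2) :
    HasDerivAt (fun y => arcsin (y / 2)) (1 / √(4 - x ^ 2)) x := by
  obtain ⟨hx₁, hx₂⟩ := abs_lt.1 hx
  have h := (hasDerivAt_arcsin (x := x / 2) (by linarith) (by linarith)).comp x
    ((hasDerivAt_id x).div_const 2)
  have hsqrt : √(1 - (x / 2) ^ 2) = √(4 - x ^ 2) / 2 := by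
    rw [show 1 - (x / 2) ^ 2 = (4 - x ^ 2) / 2 ^ 2 by ring, sqrt_div' _ (sq_nonneg 2),
      sqrt_sq zero_le_two]
  rw [hsqrt, show 1 / (√(4 - x ^ 2) / 2) * (1 / 2) = 1 / √(4 - x ^ 2) by field_simp] at h
  exact h

noncomputable def semicircleLogArg (t x : ℝ) : ℝ := 4 - t * x + √(4 - t ^ 2) * √(4 - x ^ 2)

/-- `log` is `log |·|` in Mathlib, so this single formula is a primitive on both sides of `t`. -/
noncomputable def semicirclePrimitive (t x : ℝ) : ℝ :=
  t * arcsin (x / 2) - √(4 - x ^ 2) + √(4 - t ^ 2) * (log (semicircleLogArg t x) - log (x - t))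

theorem semicircleLogArg_pos {t x : ℝ} (ht : |t| < 2) (hx : |x| ≤ 2) :
    0 < semicircleLogArg t x := by
  have htx : t * x < 4 := by
    calc t * x ≤ |t| * |x| := by rw [← abs_mul]; exact le_abs_self _
      _ < 4 := by nlinarith [abs_nonneg t, abs_nonneg x]
  unfold semicircleLogArg
  nlinarith [mul_nonneg (sqrt_nonneg (4 - t ^ 2)) (sqrt_nonneg (4 - x ^ 2))]

theorem hasDerivAt_semicircleLogArg (t : ℝ) {x : ℝ} (hx : |x| < 2) :
    HasDerivAt (semicircleLogArg t) (-t - √(4 - t ^ 2) * x / √(4 - x ^ 2)) x := by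
  have hx4 : 0 < 4 - x ^ 2 := by nlinarith [sq_abs x, abs_nonneg x]
  have h := (((hasDerivAt_id x).const_mul t).const_sub 4).add
    ((hasDerivAt_sqrt_sub_sq hx4).const_mul √(4 - t ^ 2))
  refine h.congr_deriv ?_
  ring

theorem hasDerivAt_log_semicircleLogArg_sub_log {t x : ℝ} (ht : |t| < 2) (hx : |x| < 2)
    (hxt : x ≠ t) :
    HasDerivAt (fun y => log (semicircleLogArg t y) - log (y - t))
      (√(4 - t ^ 2) / (√(4 - x ^ 2) * (t - x))) x := by
  have hx4 : 0 < 4 - x ^ 2 := by nlinarith [sq_abs x, abs_nonneg x]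
  have ht4 : 0 < 4 - t ^ 2 := by nlinarith [sq_abs t, abs_nonneg t]
  have hN := semicircleLogArg_pos ht hx.le
  have h := ((hasDerivAt_semicircleLogArg t hx).log hN.ne').sub
    (((hasDerivAt_id x).sub_const t).log (sub_ne_zero.2 hxt))
  refine h.congr_deriv ?_
  -- with `r = √(4 - x²)`, `a = √(4 - t²)`: `(x - t) N'(x) - N(x) = -(a / r) N(x)`
  have hr := sq_sqrt hx4.le
  have ha := sq_sqrt ht4.le
  have hxt' : x - t ≠ 0 := sub_ne_zero.2 hxt
  simp only [id, semicircleLogArg] at hN ⊢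
  field_simp
  linear_combination √(4 - t ^ 2) * (x - t) * hr + √(4 - x ^ 2) * (t - x) * ha

theorem hasDerivAt_semicirclePrimitive {t x : ℝ} (ht : |t| < 2) (hx : |x| < 2) (hxt : x ≠ t) :
    HasDerivAt (semicirclePrimitive t) (√(4 - x ^ 2) / (t - x)) x := by
  have hx4 : 0 < 4 - x ^ 2 := by nlinarith [sq_abs x, abs_nonneg x]
  have h := (((hasDerivAt_arcsin_div_two hx).const_mul t).sub (hasDerivAt_sqrt_sub_sq hx4)).add
    ((hasDerivAt_log_semicircleLogArg_sub_log ht hx hxt).const_mul √(4 - t ^ 2))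
  refine h.congr_deriv ?_
  have hr := sq_sqrt hx4.le
  have ha := sq_sqrt (by nlinarith [sq_abs t, abs_nonneg t] : (0 : ℝ) ≤ 4 - t ^ 2)
  have hr0 : √(4 - x ^ 2) ≠ 0 := (sqrt_pos.2 hx4).ne'
  have htx : t - x ≠ 0 := sub_ne_zero.2 hxt.symm
  field_simp
  linear_combination ha - hr

theorem continuousOn_semicirclePrimitive {t : ℝ} (ht : |t| < 2) :
    ContinuousOn (semicirclePrimitive t) (Icc (-2) 2 \ {t}) := by
  have hN : ∀ x ∈ Icc (-2 : ℝ) 2 \ {t}, semicircleLogArg t x ≠ 0 := fun x hx =>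
    (semicircleLogArg_pos ht (abs_le.2 hx.1)).ne'
  have hsub : ∀ x ∈ Icc (-2 : ℝ) 2 \ {t}, x - t ≠ 0 := fun x hx => sub_ne_zero.2 hx.2
  unfold semicirclePrimitive semicircleLogArg at *
  fun_prop (disch := assumption)

theorem semicirclePrimitive_two_sub_neg_two {t : ℝ} (ht : |t| < 2) :
    semicirclePrimitive t 2 - semicirclePrimitive t (-2) = π * t := by
  obtain ⟨ht₁, ht₂⟩ := abs_lt.1 ht
  have h2t : (2 : ℝ) - t ≠ 0 := by linarith
  have h2t' : (2 : ℝ) + t ≠ 0 := by linarith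
  simp only [semicirclePrimitive, semicircleLogArg]
  rw [show (4 : ℝ) - 2 ^ 2 = 0 by norm_num, show (4 : ℝ) - (-2) ^ 2 = 0 by norm_num,
    show (4 : ℝ) - t * 2 = 2 * (2 - t) by ring, show (4 : ℝ) - t * -2 = 2 * (2 + t) by ring,
    show (-2 : ℝ) - t = -(2 + t) by ring, log_neg_eq_log]
  simp only [sqrt_zero, mul_zero, add_zero]
  rw [log_mul two_ne_zero h2t, log_mul two_ne_zero h2t', show (2 : ℝ) / 2 = 1 by norm_num,
    show (-2 : ℝ) / 2 = -1 by norm_num, arcsin_one, arcsin_neg_one]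
  ring

theorem tendsto_semicirclePrimitive_sub {t : ℝ} (ht : |t| < 2) :
    Tendsto (fun ε => semicirclePrimitive t (t - ε) - semicirclePrimitive t (t + ε)) (𝓝 0)
      (𝓝 0) := by
  set G : ℝ → ℝ := fun x =>
    t * arcsin (x / 2) - √(4 - x ^ 2) + √(4 - t ^ 2) * log (semicircleLogArg t x)
  have hG : ContinuousAt G t := by
    have hN := (semicircleLogArg_pos ht ht.le).ne'
    unfold semicircleLogArg at hN
    simp only [G, semicircleLogArg]
    fun_prop (disch := assumption)
  have hjump : ∀ ε, semicirclePrimitive t (t - ε) - semicirclePrimitive t (t + ε) =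
      G (t - ε) - G (t + ε) := by
    intro ε
    simp only [semicirclePrimitive, G, sub_sub_cancel_left, add_sub_cancel_left, log_neg_eq_log]
    ring
  have hleft : Tendsto (fun ε => G (t - ε)) (𝓝 0) (𝓝 (G t)) :=
    hG.tendsto.comp ((continuous_const.sub continuous_id).tendsto' 0 t (sub_zero t))
  have hright : Tendsto (fun ε => G (t + ε)) (𝓝 0) (𝓝 (G t)) :=
    hG.tendsto.comp ((continuous_const.add continuous_id).tendsto' 0 t (add_zero t))
  simpa only [hjump, sub_self] using hleft.sub hright

theorem semicircle_equilibrium_equation (t : ℝ) (ht : |t| < 2) :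
    Tendsto (fun ε : ℝ =>
        ∫ s in {s : ℝ | ε < |s - t| ∧ |s| < 2},
          (1 / (2 * π)) * Real.sqrt (4 - s ^ 2) / (t - s))
      (nhdsWithin 0 (Set.Ioi 0)) (nhds (t / 2)) := by
  obtain ⟨ht₁, ht₂⟩ := abs_lt.1 ht
  have hderiv : ∀ x ∈ Ioo (-2 : ℝ) 2, x ≠ t →
      HasDerivAt (fun x => 1 / (2 * π) * semicirclePrimitive t x)
        (1 / (2 * π) * √(4 - x ^ 2) / (t - x)) x := fun x hx hxt => by
    simpa only [mul_div_assoc] using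
      (hasDerivAt_semicirclePrimitive ht (abs_lt.2 hx) hxt).const_mul (1 / (2 * π))
  have hf : ContinuousOn (fun s => 1 / (2 * π) * √(4 - s ^ 2) / (t - s)) (Icc (-2) 2 \ {t}) :=
    ContinuousOn.div (by fun_prop) (by fun_prop) fun x hx => sub_ne_zero.2 (Ne.symm hx.2)
  have hjump := ((tendsto_semicirclePrimitive_sub ht).const_mul (1 / (2 * π))).mono_left
    (nhdsWithin_le_nhds (s := Ioi 0))
  have h := tendsto_integral_punctured_of_hasDerivAt
    (F := fun x => 1 / (2 * π) * semicirclePrimitive t x) ht₁ ht₂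
    (continuousOn_const.mul (continuousOn_semicirclePrimitive ht)) hderiv hf
    (by simpa only [mul_sub, mul_zero] using hjump)
  rw [← mul_sub, semicirclePrimitive_two_sub_neg_two ht,
    show 1 / (2 * π) * (π * t) = t / 2 by field_simp] at h
  simpa only [abs_lt, mem_Ioo] using h
end
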